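/- arXiv:1403.2864 — 4 statements merged into one kernel-verified Lean document; each statement's English description precedes it below -/
import Mathlib

section
/- Let M = (S, A, AP, L, I) be an interval Markov decision process. For all states s, t ∈ S: s ∼∀ t if and only if L(s) = L(t) and H(s, ∼∀) = H(t, ∼∀), where H(s, R) is the convex hull of the union over a ∈ A of the lifted polytopes P(s, a, R). -/
open scoped Classical
open MeasureTheory

structure IMDP (S A AP : Type) [Fintype S] [Fintype A] : Type where
  L : S → Set AP
  Il : S → A → S → ℝ
  Iu : S → A → S → ℝ
  Il_nonneg : ∀ s a s', 0 ≤ Il s a s'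
  Il_le_Iu : ∀ s a s', Il s a s' ≤ Iu s a s'
  Iu_le_one : ∀ s a s', Iu s a s' ≤ 1
  feasible_nonempty : ∀ s a, ∃ μ : S → ℝ,
    (∀ s', 0 ≤ μ s') ∧ (∑ s', μ s') = 1 ∧
      ∀ s', μ s' ∈ Set.Icc (Il s a s') (Iu s a s')

def IsDist {X : Type} [Fintype X] (μ : X → ℝ) : Prop :=
  (∀ x, 0 ≤ μ x) ∧ (∑ x, μ x) = 1

def Feasible {S A AP : Type} [Fintype S] [Fintype A] (M : IMDP S A AP)
    (s : S) (a : A) (μ : S → ℝ) : Prop :=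
  IsDist μ ∧ ∀ s', μ s' ∈ Set.Icc (M.Il s a s') (M.Iu s a s')

noncomputable def classMass {S : Type} [Fintype S] (R : S → S → Prop)
    (μ : S → ℝ) (c : S) : ℝ :=
  ∑ s', if R c s' then μ s' else 0

def StepTo {S A AP : Type} [Fintype S] [Fintype A] (M : IMDP S A AP)
    (s : S) (μ : S → ℝ) : Prop :=
  μ ∈ convexHull ℝ (⋃ a : A, {ν : S → ℝ | Feasible M s a ν})

def IsForallBisim {S A AP : Type} [Fintype S] [Fintype A] (M : IMDP S A AP)
    (R : S → S → Prop) : Prop :=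
  Equivalence R ∧ ∀ s t : S, R s t → M.L s = M.L t ∧
    ∀ μ : S → ℝ, StepTo M s μ →
      ∃ ν : S → ℝ, StepTo M t ν ∧ ∀ c : S, classMass R μ c = classMass R ν c

def SimForall {S A AP : Type} [Fintype S] [Fintype A] (M : IMDP S A AP)
    (s t : S) : Prop :=
  ∃ R : S → S → Prop, IsForallBisim M R ∧ R s t

def ClassDist {S : Type} [Fintype S] (R : S → S → Prop) (ν : S → ℝ) : Prop :=
  (∀ s, 0 ≤ ν s) ∧ (∀ s t : S, R s t → ν s = ν t) ∧
  (∑ s, ν s / ((Finset.univ.filter fun x => R s x).card : ℝ)) = 1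

def PolyP {S A AP : Type} [Fintype S] [Fintype A] (M : IMDP S A AP)
    (s : S) (a : A) (R : S → S → Prop) : Set (S → ℝ) :=
  {ν | ClassDist R ν ∧
    ∀ c : S, ν c ∈ Set.Icc (classMass R (M.Il s a) c) (classMass R (M.Iu s a) c)}

def PolyH {S A AP : Type} [Fintype S] [Fintype A] (M : IMDP S A AP)
    (s : S) (R : S → S → Prop) : Set (S → ℝ) :=
  convexHull ℝ (⋃ a : A, PolyP M s a R)

/-! For an equivalence `R`, the lifted hull `H(s, R)` is exactly the image of the distributions
reachable from `s` under the linear map `classMass R`: every point of `P(s, a, R)` is the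
class-mass vector of a feasible distribution, obtained by interpolating between `Il` and `Iu`
with one weight per class. Hence an equivalence is a (∀)-bisimulation iff it only relates states
with equal labels and equal `H(·, R)`, and this condition passes to every coarser equivalence,
since class masses for a coarser relation are determined by those for a finer one.
Applied to the equivalence closure of `∼∀`, this shows that `∼∀` is an equivalence and a
bisimulation. The relation "same label and same `H(·, ∼∀)`" then contains `∼∀` and is itself a
bisimulation, so it is contained in `∼∀`. -/

open Finset

section ClassMass

variable {S : Type} [Fintype S] {R R' : S → S → Prop}

lemma classMass_eq_mulVec (R : S → S → Prop) :
    classMass R = (Matrix.of fun c s => if R c s then (1 : ℝ) else 0).mulVec := by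
  funext μ c
  simp [classMass, Matrix.mulVec, dotProduct]

lemma isLinearMap_classMass (R : S → S → Prop) : IsLinearMap ℝ (classMass R) := by
  rw [classMass_eq_mulVec]
  exact (Matrix.mulVecLin _).isLinear

lemma filter_rel_eq (hR : Equivalence R) {a b : S} (h : R a b) :
    (univ.filter fun x => R a x) = univ.filter fun x => R b x := by
  ext x
  simp only [mem_filter, mem_univ, true_and]
  exact ⟨hR.trans (hR.symm h), hR.trans h⟩

lemma classMass_congr (hR : Equivalence R) (μ : S → ℝ) {a b : S} (h : R a b) :
    classMass R μ a = classMass R μ b := by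
  simp only [classMass, ← sum_filter, filter_rel_eq hR h]

lemma classMass_mono {f g : S → ℝ} (h : ∀ s, f s ≤ g s) (c : S) :
    classMass R f c ≤ classMass R g c :=
  sum_le_sum fun s _ => by split_ifs <;> simp [h s]

lemma classMass_nonneg {f : S → ℝ} (h : ∀ s, 0 ≤ f s) (c : S) : 0 ≤ classMass R f c :=
  sum_nonneg fun s _ => by split_ifs <;> simp [h s]

lemma classMass_mul_of_congr {θ : S → ℝ} (f : S → ℝ) {c : S} (hθ : ∀ s, R c s → θ s = θ c) :
    classMass R (fun s => θ s * f s) c = θ c * classMass R f c := by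
  simp only [classMass, mul_sum]
  refine sum_congr rfl fun s _ => ?_
  split_ifs with h
  · rw [hθ s h]
  · rw [mul_zero]

lemma sum_mul_classMass_div_card (hR : Equivalence R) {g : S → ℝ}
    (hg : ∀ a b, R a b → g a = g b) (μ : S → ℝ) :
    ∑ s, g s * classMass R μ s / (univ.filter fun x => R s x).card = ∑ s, g s * μ s := by
  have hcard : ∀ s', ∑ s, (if R s s' then (1 : ℝ) else 0) = (univ.filter fun x => R s' x).card := by
    intro s'
    rw [← sum_filter, sum_const, nsmul_one]
    congr 2
    ext x
    simp only [mem_filter, mem_univ, true_and]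
    exact ⟨hR.symm, hR.symm⟩
  calc ∑ s, g s * classMass R μ s / (univ.filter fun x => R s x).card
      = ∑ s', ∑ s, if R s s' then g s * μ s' / (univ.filter fun x => R s x).card else 0 := by
        simp only [classMass, mul_sum, sum_div, mul_ite, mul_zero, ite_div, zero_div]
        exact sum_comm
    _ = ∑ s', g s' * μ s' / (univ.filter fun x => R s' x).card *
          ∑ s, (if R s s' then (1 : ℝ) else 0) := by
        refine sum_congr rfl fun s' _ => ?_
        rw [mul_sum]
        refine sum_congr rfl fun s _ => ?_
        split_ifs with h
        · rw [hg s s' h, filter_rel_eq hR h, mul_one]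
        · rw [mul_zero]
    _ = ∑ s, g s * μ s := by
        refine sum_congr rfl fun s' _ => ?_
        rw [hcard, div_mul_cancel₀]
        exact Nat.cast_ne_zero.2 (card_pos.2 ⟨s', by simp [hR.refl s']⟩).ne'

lemma sum_classMass_div_card (hR : Equivalence R) (μ : S → ℝ) :
    ∑ s, classMass R μ s / (univ.filter fun x => R s x).card = ∑ s, μ s := by
  simpa using sum_mul_classMass_div_card hR (g := fun _ => 1) (fun _ _ _ => rfl) μ

lemma classMass_eq_of_le (hR : Equivalence R) (hR' : Equivalence R') (hle : R ≤ R')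
    {μ ν : S → ℝ} (h : classMass R μ = classMass R ν) : classMass R' μ = classMass R' ν := by
  funext c
  have hg : ∀ a b, R a b → (if R' c a then (1 : ℝ) else 0) = if R' c b then 1 else 0 :=
    fun a b hab => if_congr ⟨fun h => hR'.trans h (hle a b hab),
      fun h => hR'.trans h (hR'.symm (hle a b hab))⟩ rfl rfl
  have hμ := sum_mul_classMass_div_card hR hg μ
  have hν := sum_mul_classMass_div_card hR hg ν
  have hR'c : ∀ f, classMass R' f c = ∑ s, (if R' c s then 1 else 0) * f s := fun f => by
    simp [classMass]
  rw [hR'c, hR'c, ← hμ, ← hν, h]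

/-- The weight `θ` of a class with `classMass l = classMass u` is the junk value `0 / 0 = 0`,
which is harmless: on such a class `ν = classMass l`. -/
lemma exists_mem_Icc_classMass_eq (hR : Equivalence R) {l u ν : S → ℝ} (hlu : ∀ s, l s ≤ u s)
    (hν : ∀ c, ν c ∈ Set.Icc (classMass R l c) (classMass R u c))
    (hνR : ∀ a b, R a b → ν a = ν b) :
    ∃ μ : S → ℝ, (∀ s, μ s ∈ Set.Icc (l s) (u s)) ∧ classMass R μ = ν := by
  set L := classMass R l
  set U := classMass R u
  set θ : S → ℝ := fun c => (ν c - L c) / (U c - L c)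
  have hθ_mem : ∀ s, θ s ∈ Set.Icc 0 1 := fun s =>
    ⟨div_nonneg (by linarith [(hν s).1]) (by linarith [(hν s).1, (hν s).2]),
      div_le_one_of_le₀ (by linarith [(hν s).2]) (by linarith [(hν s).1, (hν s).2])⟩
  have hθR : ∀ c s, R c s → θ s = θ c := fun c s h => by
    simp only [θ, L, U, classMass_congr hR l h, classMass_congr hR u h, hνR c s h]
  have hθ_mul : ∀ c, θ c * (U c - L c) = ν c - L c := fun c => by
    rcases eq_or_ne (U c - L c) 0 with h | h
    · have : ν c = L c := le_antisymm (by linarith [(hν c).2]) (hν c).1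
      rw [h, mul_zero, this, sub_self]
    · exact div_mul_cancel₀ _ h
  refine ⟨fun s => l s + θ s * (u s - l s), fun s => ⟨?_, ?_⟩, funext fun c => ?_⟩
  · nlinarith [(hθ_mem s).1, hlu s]
  · nlinarith [(hθ_mem s).2, hlu s]
  · have hlin := isLinearMap_classMass R
    calc classMass R (l + fun s => θ s * (u - l) s) c
        = L c + θ c * classMass R (u - l) c := by
          rw [hlin.map_add, Pi.add_apply, classMass_mul_of_congr _ (hθR c)]
      _ = ν c := by rw [hlin.map_sub, Pi.sub_apply, hθ_mul, add_sub_cancel]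

end ClassMass

section Bisimulation

variable {S A AP : Type} [Fintype S] [Fintype A] {R R' : S → S → Prop}

lemma polyP_eq_image (M : IMDP S A AP) (s : S) (a : A) (hR : Equivalence R) :
    PolyP M s a R = classMass R '' {μ | Feasible M s a μ} := by
  ext ν
  constructor
  · rintro ⟨⟨-, hνR, hν_sum⟩, hν⟩
    obtain ⟨μ, hμ, rfl⟩ := exists_mem_Icc_classMass_eq hR (M.Il_le_Iu s a) hν hνR
    refine ⟨μ, ⟨⟨fun x => (M.Il_nonneg s a x).trans (hμ x).1, ?_⟩, hμ⟩, rfl⟩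
    rw [← sum_classMass_div_card hR, hν_sum]
  · rintro ⟨μ, ⟨⟨hμ_nonneg, hμ_sum⟩, hμ⟩, rfl⟩
    refine ⟨⟨classMass_nonneg hμ_nonneg, fun _ _ => classMass_congr hR μ, ?_⟩,
      fun c => ⟨classMass_mono (fun x => (hμ x).1) c, classMass_mono (fun x => (hμ x).2) c⟩⟩
    rw [sum_classMass_div_card hR, hμ_sum]

lemma polyH_eq_image (M : IMDP S A AP) (s : S) (hR : Equivalence R) :
    PolyH M s R = classMass R '' {μ | StepTo M s μ} := by
  simp only [StepTo, Set.ofPred_mem_eq]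
  rw [(isLinearMap_classMass R).image_convexHull, Set.image_iUnion, PolyH]
  simp only [polyP_eq_image M s _ hR]

def LabelPolyHRel (M : IMDP S A AP) (R : S → S → Prop) (s t : S) : Prop :=
  M.L s = M.L t ∧ PolyH M s R = PolyH M t R

lemma labelPolyHRel_equivalence (M : IMDP S A AP) (R : S → S → Prop) :
    Equivalence (LabelPolyHRel M R) :=
  ⟨fun _ => ⟨rfl, rfl⟩, fun h => ⟨h.1.symm, h.2.symm⟩,
    fun h₁ h₂ => ⟨h₁.1.trans h₂.1, h₁.2.trans h₂.2⟩⟩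

lemma labelPolyHRel_mono (M : IMDP S A AP) (hR : Equivalence R) (hR' : Equivalence R')
    (hle : R ≤ R') : LabelPolyHRel M R ≤ LabelPolyHRel M R' := by
  have hsub : ∀ {s t}, PolyH M s R ⊆ PolyH M t R → PolyH M s R' ⊆ PolyH M t R' := by
    intro s t h
    rw [polyH_eq_image M s hR, polyH_eq_image M t hR] at h
    rw [polyH_eq_image M s hR', polyH_eq_image M t hR']
    rintro _ ⟨μ, hμ, rfl⟩
    obtain ⟨ν, hν, hνμ⟩ := h ⟨μ, hμ, rfl⟩
    exact ⟨ν, hν, classMass_eq_of_le hR hR' hle hνμ⟩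
  exact fun s t h => ⟨h.1, (hsub h.2.le).antisymm (hsub h.2.ge)⟩

lemma isForallBisim_iff (M : IMDP S A AP) :
    IsForallBisim M R ↔ Equivalence R ∧ R ≤ LabelPolyHRel M R := by
  refine ⟨fun ⟨hR, h⟩ => ⟨hR, ?_⟩, fun ⟨hR, h⟩ => ⟨hR, ?_⟩⟩
  · have hsub : ∀ {s t}, R s t → PolyH M s R ⊆ PolyH M t R := by
      intro s t hst
      rw [polyH_eq_image M s hR, polyH_eq_image M t hR]
      rintro _ ⟨μ, hμ, rfl⟩
      obtain ⟨ν, hν, hμν⟩ := (h s t hst).2 μ hμ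
      exact ⟨ν, hν, (funext hμν).symm⟩
    exact fun s t hst => ⟨(h s t hst).1, (hsub hst).antisymm (hsub (hR.symm hst))⟩
  · intro s t hst
    refine ⟨(h s t hst).1, fun μ hμ => ?_⟩
    have hmem : classMass R μ ∈ PolyH M t R := by
      rw [← (h s t hst).2, polyH_eq_image M s hR]
      exact ⟨μ, hμ, rfl⟩
    rw [polyH_eq_image M t hR] at hmem
    obtain ⟨ν, hν, hνμ⟩ := hmem
    exact ⟨ν, hν, fun c => (congrFun hνμ c).symm⟩

lemma isForallBisim_eqvGen_simForall (M : IMDP S A AP) :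
    IsForallBisim M (Relation.EqvGen (SimForall M)) := by
  have hE := Relation.EqvGen.is_equivalence (SimForall M)
  refine (isForallBisim_iff M).2 ⟨hE, fun s t hst => ?_⟩
  refine (labelPolyHRel_equivalence M _).eqvGen_iff.1 (Relation.EqvGen.mono ?_ s t hst)
  rintro a b ⟨R₀, hR₀, hab⟩
  have hle : R₀ ≤ Relation.EqvGen (SimForall M) := fun x y h => .rel _ _ ⟨R₀, hR₀, h⟩
  exact labelPolyHRel_mono M hR₀.1 hE hle a b (((isForallBisim_iff M).1 hR₀).2 a b hab)

lemma simForall_eq_eqvGen (M : IMDP S A AP) :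
    SimForall M = Relation.EqvGen (SimForall M) :=
  le_antisymm (fun _ _ => .rel _ _) fun _ _ h => ⟨_, isForallBisim_eqvGen_simForall M, h⟩

lemma isForallBisim_simForall (M : IMDP S A AP) : IsForallBisim M (SimForall M) := by
  rw [simForall_eq_eqvGen M]
  exact isForallBisim_eqvGen_simForall M

end Bisimulation

theorem stmt6 {S A AP : Type} [Fintype S] [Fintype A] (M : IMDP S A AP) (s t : S) :
    SimForall M s t ↔
      (M.L s = M.L t ∧ PolyH M s (SimForall M) = PolyH M t (SimForall M)) := by
  obtain ⟨hE, hle⟩ := (isForallBisim_iff M).1 (isForallBisim_simForall M)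
  refine ⟨hle s t, fun hst => ⟨LabelPolyHRel M (SimForall M), ?_, hst⟩⟩
  have hK := labelPolyHRel_equivalence M (SimForall M)
  exact (isForallBisim_iff M).2 ⟨hK, labelPolyHRel_mono M hE hK hle⟩
end

section
/- There exists an interval Markov decision process M = (S, A, AP, L, I) and states t, t̄, u, ū ∈ S such that t ∼∀ t̄ but not t ∼∃σ∀ t̄, and u ∼∃σ∀ ū but not u ∼∀ ū. Hence neither of the relations ∼∀ and ∼∃σ∀ is contained in the other in general. -/
open scoped Classical
open MeasureTheory

def StepRho {S A AP : Type} [Fintype S] [Fintype A] (M : IMDP S A AP)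
    (s : S) (ρ : A → ℝ) (μ : S → ℝ) : Prop :=
  ∃ μa : A → S → ℝ, (∀ a, Feasible M s a (μa a)) ∧
    μ = fun s' => ∑ a, ρ a * μa a s'

def IsESBisim {S A AP : Type} [Fintype S] [Fintype A] (M : IMDP S A AP)
    (R : S → S → Prop) : Prop :=
  Equivalence R ∧ ∀ s t : S, R s t → M.L s = M.L t ∧
    ∀ ρs : A → ℝ, IsDist ρs → ∃ ρt : A → ℝ, IsDist ρt ∧
      ∀ ν : S → ℝ, StepRho M t ρt ν →
        ∃ μ : S → ℝ, StepRho M s ρs μ ∧ ∀ c : S, classMass R μ c = classMass R ν c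

def SimES {S A AP : Type} [Fintype S] [Fintype A] (M : IMDP S A AP) (s t : S) : Prop :=
  ∃ R : S → S → Prop, IsESBisim M R ∧ R s t

-- ===== construction =====
namespace Stmt13

/-- point distribution on x (state 4) -/
noncomputable def dx : Fin 6 → ℝ := fun s => if s = 4 then 1 else 0
/-- point distribution on y (state 5) -/
noncomputable def dy : Fin 6 → ℝ := fun s => if s = 5 then 1 else 0
/-- half-half on x and y -/
noncomputable def dv : Fin 6 → ℝ := fun s => if s = 4 then 1/2 else if s = 5 then 1/2 else 0

noncomputable def lo : Fin 6 → Bool → Fin 6 → ℝ := fun s a s' =>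
  if s = 0 then (if a then dx s' else dy s')
  else if s = 1 then 0
  else if s = 2 then (if a then 0 else dv s')
  else if s = 3 then dv s'
  else if s = 4 then dx s'
  else dy s'

noncomputable def hi : Fin 6 → Bool → Fin 6 → ℝ := fun s a s' =>
  if s = 0 then (if a then dx s' else dy s')
  else if s = 1 then (if s' = 4 ∨ s' = 5 then 1 else 0)
  else if s = 2 then (if a then (if s' = 4 ∨ s' = 5 then 1 else 0) else dv s')
  else if s = 3 then dv s'
  else if s = 4 then dx s'
  else dy s'

def lab : Fin 6 → Fin 4 := ![0, 0, 1, 1, 2, 3]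

lemma isDist_dx : IsDist dx := by
  constructor
  · intro s; unfold dx; split <;> norm_num
  · rw [Fin.sum_univ_six]; simp [dx]

lemma isDist_dy : IsDist dy := by
  constructor
  · intro s; unfold dy; split <;> norm_num
  · rw [Fin.sum_univ_six]; simp [dy]

lemma isDist_dv : IsDist dv := by
  constructor
  · intro s; unfold dv; split_ifs <;> norm_num
  · rw [Fin.sum_univ_six]; simp [dv]; norm_num

noncomputable def M : IMDP (Fin 6) Bool (Fin 4) where
  L := fun s => {lab s}
  Il := lo
  Iu := hi
  Il_nonneg := by
    intro s a s'; unfold lo dx dy dv; split_ifs <;> norm_num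
  Il_le_Iu := by
    intro s a s'; unfold lo hi dx dy dv; split_ifs <;> norm_num
  Iu_le_one := by
    intro s a s'; unfold hi dx dy dv; split_ifs <;> norm_num
  feasible_nonempty := by
    intro s a
    fin_cases s
    · cases a
      · exact ⟨dy, isDist_dy.1, isDist_dy.2, by
          intro s'; fin_cases s' <;> simp [lo, hi, dy, dx, dv] <;> norm_num⟩
      · exact ⟨dx, isDist_dx.1, isDist_dx.2, by
          intro s'; fin_cases s' <;> simp [lo, hi, dy, dx, dv] <;> norm_num⟩
    · exact ⟨dx, isDist_dx.1, isDist_dx.2, by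
        intro s'; fin_cases s' <;> cases a <;> simp [lo, hi, dy, dx, dv] <;> norm_num⟩
    · exact ⟨dv, isDist_dv.1, isDist_dv.2, by
        intro s'; fin_cases s' <;> cases a <;> simp [lo, hi, dy, dx, dv] <;> norm_num⟩
    · exact ⟨dv, isDist_dv.1, isDist_dv.2, by
        intro s'; fin_cases s' <;> cases a <;> simp [lo, hi, dy, dx, dv] <;> norm_num⟩
    · exact ⟨dx, isDist_dx.1, isDist_dx.2, by
        intro s'; fin_cases s' <;> cases a <;> simp [lo, hi, dy, dx, dv] <;> norm_num⟩
    · exact ⟨dy, isDist_dy.1, isDist_dy.2, by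
        intro s'; fin_cases s' <;> cases a <;> simp [lo, hi, dy, dx, dv] <;> norm_num⟩

end Stmt13

namespace Stmt13

-- ===== feasibility facts =====
lemma f0t : Feasible M 0 true dx := by
  refine ⟨isDist_dx, ?_⟩
  intro s'; fin_cases s' <;> simp [M, lo, hi, dx]

lemma f0f : Feasible M 0 false dy := by
  refine ⟨isDist_dy, ?_⟩
  intro s'; fin_cases s' <;> simp [M, lo, hi, dy]

lemma f1dx (a : Bool) : Feasible M 1 a dx := by
  refine ⟨isDist_dx, ?_⟩
  intro s'; fin_cases s' <;> simp [M, lo, hi, dx]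

lemma f1dy (a : Bool) : Feasible M 1 a dy := by
  refine ⟨isDist_dy, ?_⟩
  intro s'; fin_cases s' <;> simp [M, lo, hi, dy]

lemma f2dx : Feasible M 2 true dx := by
  refine ⟨isDist_dx, ?_⟩
  intro s'; fin_cases s' <;> simp [M, lo, hi, dx, dv] <;> norm_num

lemma f2dv (a : Bool) : Feasible M 2 a dv := by
  refine ⟨isDist_dv, ?_⟩
  intro s'; fin_cases s' <;> cases a <;> simp [M, lo, hi, dv] <;> norm_num

lemma f3dv (a : Bool) : Feasible M 3 a dv := by
  refine ⟨isDist_dv, ?_⟩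
  intro s'; fin_cases s' <;> simp [M, lo, hi, dv]

-- ===== deterministic-row characterizations =====
lemma feas0t {μ : Fin 6 → ℝ} (h : Feasible M 0 true μ) : μ = dx := by
  funext s'
  have h2 := h.2 s'
  fin_cases s' <;> simp [M, lo, hi, dx, Set.mem_Icc] at h2 ⊢ <;> linarith

lemma feas0f {μ : Fin 6 → ℝ} (h : Feasible M 0 false μ) : μ = dy := by
  funext s'
  have h2 := h.2 s'
  fin_cases s' <;> simp [M, lo, hi, dy, Set.mem_Icc] at h2 ⊢ <;> linarith

lemma feas2f {μ : Fin 6 → ℝ} (h : Feasible M 2 false μ) : μ = dv := by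
  funext s'
  have h2 := h.2 s'
  fin_cases s' <;> simp [M, lo, hi, dv, Set.mem_Icc] at h2 ⊢ <;> linarith

lemma feas3 {μ : Fin 6 → ℝ} (a : Bool) (h : Feasible M 3 a μ) : μ = dv := by
  funext s'
  have h2 := h.2 s'
  fin_cases s' <;> simp [M, lo, hi, dv, Set.mem_Icc] at h2 ⊢ <;> linarith

lemma feas1 {μ : Fin 6 → ℝ} (a : Bool) (h : Feasible M 1 a μ) :
    μ = μ 4 • dx + μ 5 • dy ∧ 0 ≤ μ 4 ∧ 0 ≤ μ 5 ∧ μ 4 + μ 5 = 1 := by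
  have hz : ∀ s' : Fin 6, s' ≠ 4 → s' ≠ 5 → μ s' = 0 := by
    intro s' h4 h5
    have h2 := h.2 s'
    simp [M, lo, hi, Set.mem_Icc, h4, h5] at h2
    first | exact h2 | linarith [h2.1, h2.2]
  have h0 := hz 0 (by decide) (by decide)
  have h1 := hz 1 (by decide) (by decide)
  have h2 := hz 2 (by decide) (by decide)
  have h3 := hz 3 (by decide) (by decide)
  have hsum := h.1.2
  rw [Fin.sum_univ_six] at hsum
  refine ⟨?_, h.1.1 4, h.1.1 5, by linarith⟩
  funext s'
  fin_cases s' <;> simp [dx, dy, h0, h1, h2, h3]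

end Stmt13

namespace Stmt13

-- ===== StepTo lemmas =====
lemma step_mem {s : Fin 6} {a : Bool} {μ : Fin 6 → ℝ} (h : Feasible M s a μ) :
    StepTo M s μ :=
  subset_convexHull ℝ _ (Set.mem_iUnion.2 ⟨a, h⟩)

lemma step01 {μ : Fin 6 → ℝ} (h : StepTo M 0 μ) : StepTo M 1 μ := by
  refine convexHull_mono ?_ h
  intro ν hν
  obtain ⟨_, ⟨a, rfl⟩, hmem⟩ := hν
  cases a
  · exact Set.mem_iUnion.2 ⟨false, by rw [Set.mem_setOf_eq] at hmem ⊢; rw [feas0f hmem]; exact f1dy false⟩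
  · exact Set.mem_iUnion.2 ⟨true, by rw [Set.mem_setOf_eq] at hmem ⊢; rw [feas0t hmem]; exact f1dx true⟩

lemma step10 {μ : Fin 6 → ℝ} (h : StepTo M 1 μ) : StepTo M 0 μ := by
  have hsub : (⋃ a : Bool, {ν : Fin 6 → ℝ | Feasible M 1 a ν}) ⊆
      convexHull ℝ (⋃ a : Bool, {ν : Fin 6 → ℝ | Feasible M 0 a ν}) := by
    intro ν hν
    obtain ⟨_, ⟨a, rfl⟩, hmem⟩ := hν
    rw [Set.mem_setOf_eq] at hmem
    obtain ⟨hdec, h4, h5, hsum⟩ := feas1 a hmem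
    rw [hdec]
    exact (convex_convexHull ℝ _)
      (subset_convexHull ℝ _ (Set.mem_iUnion.2 ⟨true, f0t⟩))
      (subset_convexHull ℝ _ (Set.mem_iUnion.2 ⟨false, f0f⟩)) h4 h5 hsum
  exact convexHull_min hsub (convex_convexHull ℝ _) h

lemma step3 {ν : Fin 6 → ℝ} (h : StepTo M 3 ν) : ν = dv := by
  have hsub : (⋃ a : Bool, {μ : Fin 6 → ℝ | Feasible M 3 a μ}) ⊆ ({dv} : Set (Fin 6 → ℝ)) := by
    intro μ hμ
    obtain ⟨_, ⟨a, rfl⟩, hmem⟩ := hμ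
    exact feas3 a hmem
  have := convexHull_min hsub (convex_singleton dv) h
  exact this

-- ===== StepRho lemmas =====
lemma stepRho_const (s : Fin 6) (d : Fin 6 → ℝ) (hf : ∀ a, Feasible M s a d)
    {ρ : Bool → ℝ} (hρ : IsDist ρ) : StepRho M s ρ d := by
  refine ⟨fun _ => d, hf, ?_⟩
  funext s'
  rw [← Finset.sum_mul, hρ.2, one_mul]

lemma stepRho3 {ρ : Bool → ℝ} (hρ : IsDist ρ) {ν : Fin 6 → ℝ}
    (h : StepRho M 3 ρ ν) : ν = dv := by
  obtain ⟨μa, hfa, rfl⟩ := h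
  funext s'
  show (∑ a, ρ a * μa a s') = dv s'
  have : ∀ a, μa a s' = dv s' := fun a => by rw [feas3 a (hfa a)]
  calc ∑ a, ρ a * μa a s' = ∑ a, ρ a * dv s' := by
        refine Finset.sum_congr rfl fun a _ => by rw [this a]
    _ = dv s' := by rw [← Finset.sum_mul, hρ.2, one_mul]

/-- point mass on `false` -/
noncomputable def δf : Bool → ℝ := fun a => if a then 0 else 1

lemma isDist_δf : IsDist δf := by
  constructor
  · intro a; cases a <;> simp [δf]
  · rw [Fintype.sum_bool]; simp [δf]

lemma stepRho2f {ν : Fin 6 → ℝ} (h : StepRho M 2 δf ν) : ν = dv := by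
  obtain ⟨μa, hfa, rfl⟩ := h
  funext s'
  rw [Fintype.sum_bool]
  simp [δf]
  exact congrFun (feas2f (hfa false)) s'

-- ===== classMass lemmas =====
lemma classMass_unique {R : Fin 6 → Fin 6 → Prop} (hrefl : ∀ x, R x x)
    {c : Fin 6} (h : ∀ s', R c s' → s' = c) (μ : Fin 6 → ℝ) :
    classMass R μ c = μ c := by
  unfold classMass
  rw [Finset.sum_eq_single c]
  · exact if_pos (hrefl c)
  · intro b _ hb
    exact if_neg (fun hR => hb (h b hR))
  · intro hc; exact absurd (Finset.mem_univ c) hc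

end Stmt13

namespace Stmt13

def g01 : Fin 6 → Fin 6 := fun s => if s = 1 then 0 else s
def g23 : Fin 6 → Fin 6 := fun s => if s = 3 then 2 else s

lemma classify01 : ∀ p q : Fin 6, g01 p = g01 q →
    p = q ∨ (p = 0 ∧ q = 1) ∨ (p = 1 ∧ q = 0) := by decide

lemma classify23 : ∀ p q : Fin 6, g23 p = g23 q →
    p = q ∨ (p = 2 ∧ q = 3) ∨ (p = 3 ∧ q = 2) := by decide

lemma lab_unique (c : Fin 6) {R : Fin 6 → Fin 6 → Prop}
    (hcond : ∀ s t : Fin 6, R s t → M.L s = M.L t)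
    (hc : ∀ s' : Fin 6, lab c = lab s' → s' = c) :
    ∀ s', R c s' → s' = c := by
  intro s' hRs
  have hL := hcond c s' hRs
  have : lab c = lab s' := by
    simpa [M, Set.singleton_eq_singleton_iff] using hL
  exact hc s' this

lemma simForall01 : SimForall M 0 1 := by
  refine ⟨fun p q => g01 p = g01 q, ⟨⟨fun _ => rfl, Eq.symm, Eq.trans⟩, ?_⟩, rfl⟩
  intro s t h
  rcases classify01 s t h with rfl | ⟨rfl, rfl⟩ | ⟨rfl, rfl⟩
  · exact ⟨rfl, fun μ hμ => ⟨μ, hμ, fun c => rfl⟩⟩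
  · exact ⟨by simp [M, lab], fun μ hμ => ⟨μ, step01 hμ, fun c => rfl⟩⟩
  · exact ⟨by simp [M, lab], fun μ hμ => ⟨μ, step10 hμ, fun c => rfl⟩⟩

/-- point mass on `true` -/
noncomputable def δt : Bool → ℝ := fun a => if a then 1 else 0

lemma isDist_δt : IsDist δt := by
  constructor
  · intro a; cases a <;> simp [δt]
  · rw [Fintype.sum_bool]; simp [δt]

lemma notSimES01 : ¬ SimES M 0 1 := by
  rintro ⟨R, ⟨hEq, hcond⟩, hR⟩
  have h5 : ∀ s', R 5 s' → s' = 5 :=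
    lab_unique 5 (fun s t h => (hcond s t h).1) (by decide)
  obtain ⟨_, hstep⟩ := hcond 0 1 hR
  obtain ⟨ρt, hρt, hmatch⟩ := hstep δt isDist_δt
  obtain ⟨μ, hμ, hcm⟩ := hmatch dy (stepRho_const 1 dy f1dy hρt)
  have e := hcm 5
  rw [classMass_unique hEq.refl h5, classMass_unique hEq.refl h5] at e
  obtain ⟨μa, hfa, rfl⟩ := hμ
  have h0 : (∑ a, δt a * μa a 5) = 0 := by
    rw [Fintype.sum_bool]
    have : μa true 5 = 0 := by rw [feas0t (hfa true)]; simp [dx]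
    simp [δt, this]
  have h1 : dy 5 = 1 := by simp [dy]
  rw [h1] at e
  have : (∑ a, δt a * μa a 5) = 1 := e
  rw [h0] at this
  norm_num at this

lemma simES23 : SimES M 2 3 := by
  refine ⟨fun p q => g23 p = g23 q, ⟨⟨fun _ => rfl, Eq.symm, Eq.trans⟩, ?_⟩, rfl⟩
  intro s t h
  rcases classify23 s t h with rfl | ⟨rfl, rfl⟩ | ⟨rfl, rfl⟩
  · exact ⟨rfl, fun ρ hρ => ⟨ρ, hρ, fun ν hν => ⟨ν, hν, fun c => rfl⟩⟩⟩
  · refine ⟨by simp [M, lab], fun ρ hρ => ⟨ρ, hρ, fun ν hν => ?_⟩⟩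
    have hνdv := stepRho3 hρ hν
    exact ⟨dv, stepRho_const 2 dv f2dv hρ, fun c => by rw [hνdv]⟩
  · refine ⟨by simp [M, lab], fun ρ hρ => ⟨δf, isDist_δf, fun ν hν => ?_⟩⟩
    have hνdv := stepRho2f hν
    exact ⟨dv, stepRho_const 3 dv f3dv hρ, fun c => by rw [hνdv]⟩

lemma notSimForall23 : ¬ SimForall M 2 3 := by
  rintro ⟨R, ⟨hEq, hcond⟩, hR⟩
  have h4 : ∀ s', R 4 s' → s' = 4 :=
    lab_unique 4 (fun s t h => (hcond s t h).1) (by decide)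
  obtain ⟨_, hstep⟩ := hcond 2 3 hR
  obtain ⟨ν, hν, hcm⟩ := hstep dx (step_mem f2dx)
  have hνdv := step3 hν
  have e := hcm 4
  rw [classMass_unique hEq.refl h4, classMass_unique hEq.refl h4, hνdv] at e
  simp [dx, dv] at e

end Stmt13


theorem stmt13 :
    ∃ (S A AP : Type) (_ : Fintype S) (_ : Fintype A) (M : IMDP S A AP)
      (t tb u ub : S),
      SimForall M t tb ∧ ¬ SimES M t tb ∧ SimES M u ub ∧ ¬ SimForall M u ub := by
  exact ⟨Fin 6, Bool, Fin 4, inferInstance, inferInstance, Stmt13.M, 0, 1, 2, 3,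
    Stmt13.simForall01, Stmt13.notSimES01, Stmt13.simES23, Stmt13.notSimForall23⟩
end

section
/- Let M = (S, A, AP, L, I) be an interval Markov decision process in which every interval I(s,a,s') is a singleton (i.e. a degenerate interval [p(s,a,s'), p(s,a,s')]). Then the relations ∼∀ and ∼∃σ∀ coincide on S. -/
open scoped Classical
open MeasureTheory

section Aux

variable {S A AP : Type} [Fintype S] [Fintype A] (M : IMDP S A AP)

lemma il_eq (hsing : ∀ (s : S) (a : A) (s' : S), M.Il s a s' = M.Iu s a s')
    (s : S) (a : A) : ∀ μ : S → ℝ,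
    ((∀ s', 0 ≤ μ s') ∧ (∑ s', μ s') = 1 ∧
      ∀ s', μ s' ∈ Set.Icc (M.Il s a s') (M.Iu s a s')) → μ = M.Il s a := by
  intro μ ⟨_, _, h⟩
  funext s'
  have := h s'
  rw [← hsing s a s'] at this
  simpa [Set.Icc_self] using this

lemma il_isDist (hsing : ∀ (s : S) (a : A) (s' : S), M.Il s a s' = M.Iu s a s')
    (s : S) (a : A) : IsDist (M.Il s a) := by
  obtain ⟨μ, h1, h2, h3⟩ := M.feasible_nonempty s a
  have := il_eq M hsing s a μ ⟨h1, h2, h3⟩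
  exact this ▸ ⟨h1, h2⟩

lemma feasible_iff (hsing : ∀ (s : S) (a : A) (s' : S), M.Il s a s' = M.Iu s a s')
    (s : S) (a : A) (μ : S → ℝ) :
    Feasible M s a μ ↔ μ = M.Il s a := by
  constructor
  · rintro ⟨⟨h1, h2⟩, h3⟩; exact il_eq M hsing s a μ ⟨h1, h2, h3⟩
  · rintro rfl
    exact ⟨il_isDist M hsing s a, fun s' => ⟨le_refl _, (hsing s a s').le⟩⟩

lemma stepRho_iff (hsing : ∀ (s : S) (a : A) (s' : S), M.Il s a s' = M.Iu s a s')
    (s : S) (ρ : A → ℝ) (μ : S → ℝ) :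
    StepRho M s ρ μ ↔ μ = fun s' => ∑ a, ρ a * M.Il s a s' := by
  constructor
  · rintro ⟨μa, hfeas, rfl⟩
    have : ∀ a, μa a = M.Il s a := fun a => (feasible_iff M hsing s a _).1 (hfeas a)
    funext s'; simp [this]
  · rintro rfl
    exact ⟨fun a => M.Il s a, fun a => (feasible_iff M hsing s a _).2 rfl, rfl⟩

lemma stepTo_iff (hsing : ∀ (s : S) (a : A) (s' : S), M.Il s a s' = M.Iu s a s')
    (s : S) (μ : S → ℝ) :
    StepTo M s μ ↔ ∃ ρ : A → ℝ, IsDist ρ ∧ StepRho M s ρ μ := by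
  constructor
  · intro h
    rw [StepTo, mem_convexHull_iff_exists_fintype] at h
    obtain ⟨ι, _, w, z, hw0, hw1, hz, hsum⟩ := h
    have hz' : ∀ i, ∃ a : A, z i = M.Il s a := by
      intro i
      obtain ⟨_, ⟨a, rfl⟩, hmem⟩ := hz i
      exact ⟨a, (feasible_iff M hsing s a _).1 hmem⟩
    choose g hg using hz'
    refine ⟨fun a => ∑ i, if g i = a then w i else 0, ⟨?_, ?_⟩, ?_⟩
    · intro a
      exact Finset.sum_nonneg fun i _ => by by_cases h : g i = a <;> simp [h, hw0 i]
    · rw [Finset.sum_comm]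
      simp [hw1]
    · rw [stepRho_iff M hsing]
      funext s'
      have := congrFun hsum s'
      simp only [Finset.sum_apply, Pi.smul_apply, smul_eq_mul] at this
      rw [← this]
      simp only [Finset.sum_mul]
      rw [Finset.sum_comm]
      refine Finset.sum_congr rfl fun i _ => ?_
      simp [ite_mul, hg i]
  · rintro ⟨ρ, ⟨hρ0, hρ1⟩, hstep⟩
    rw [stepRho_iff M hsing] at hstep
    subst hstep
    rw [StepTo]
    refine mem_convexHull_of_exists_fintype ρ (fun a => M.Il s a) hρ0 hρ1 ?_ ?_
    · intro a
      exact Set.mem_iUnion.2 ⟨a, (feasible_iff M hsing s a _).2 rfl⟩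
    · funext s'; simp [mul_comm]

end Aux

theorem stmt14 {S A AP : Type} [Fintype S] [Fintype A] (M : IMDP S A AP)
    (hsing : ∀ (s : S) (a : A) (s' : S), M.Il s a s' = M.Iu s a s') :
    ∀ s t : S, SimForall M s t ↔ SimES M s t := by
  intro s t
  constructor
  · rintro ⟨R, ⟨hEq, h⟩, hst⟩
    refine ⟨R, ⟨hEq, fun s' t' hr => ⟨(h s' t' hr).1, ?_⟩⟩, hst⟩
    intro ρs hρs
    have hstep : StepRho M s' ρs (fun x => ∑ a, ρs a * M.Il s' a x) :=
      (stepRho_iff M hsing s' ρs _).2 rfl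
    obtain ⟨ν, hν, hmass⟩ := (h s' t' hr).2 _ ((stepTo_iff M hsing s' _).2 ⟨ρs, hρs, hstep⟩)
    obtain ⟨ρt, hρt, hνstep⟩ := (stepTo_iff M hsing t' ν).1 hν
    refine ⟨ρt, hρt, fun ν' hν' => ?_⟩
    have : ν' = ν := by
      rw [(stepRho_iff M hsing t' ρt ν').1 hν', (stepRho_iff M hsing t' ρt ν).1 hνstep]
    subst this
    exact ⟨_, hstep, hmass⟩
  · rintro ⟨R, ⟨hEq, h⟩, hst⟩
    refine ⟨R, ⟨hEq, fun s' t' hr => ⟨(h s' t' hr).1, ?_⟩⟩, hst⟩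
    intro μ hμ
    obtain ⟨ρs, hρs, hμstep⟩ := (stepTo_iff M hsing s' μ).1 hμ
    obtain ⟨ρt, hρt, hall⟩ := (h s' t' hr).2 ρs hρs
    set ν : S → ℝ := fun x => ∑ a, ρt a * M.Il t' a x with hνdef
    have hνstep : StepRho M t' ρt ν := (stepRho_iff M hsing t' ρt ν).2 rfl
    obtain ⟨μ', hμ'step, hmass⟩ := hall ν hνstep
    have : μ' = μ := by
      rw [(stepRho_iff M hsing s' ρs μ').1 hμ'step, (stepRho_iff M hsing s' ρs μ).1 hμstep]
    subst this
    exact ⟨ν, (stepTo_iff M hsing t' ν).2 ⟨ρt, hρt, hνstep⟩, hmass⟩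
end

section
/- Let f ≥ 1 and for each i ∈ {1,…,f} let [lᵢ, uᵢ] ⊆ [0,1] be a closed interval. Then the polytope Q = {x ∈ ℝ^f : xᵢ ≥ 0 for all i, Σᵢ xᵢ = 1, and lᵢ ≤ xᵢ ≤ uᵢ for all i} has at most f·2^{f−1} extreme points. -/
/-!
An extreme point of `Q` has at most one coordinate strictly inside its interval: if two
coordinates `i ≠ j` were, shifting a little mass between them in either direction stays in `Q`
and exhibits the point as a midpoint. Because the coordinates sum to `1`, such a point is
determined by its free index together with the choice of lower or upper bound at each of the
other `f - 1` coordinates. The constraint `0 ≤ xᵢ` is absorbed by replacing `lᵢ` with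
`max lᵢ 0`.
-/

open Set Function

theorem eq_of_sum_eq_of_forall_ne {ι M : Type*} [Fintype ι] [AddCommGroup M]
    {x y : ι → M} (i : ι) (hsum : ∑ j, x j = ∑ j, y j) (hne : ∀ j ≠ i, x j = y j) : x = y := by
  classical
  have hrest : ∑ j ∈ Finset.univ.erase i, x j = ∑ j ∈ Finset.univ.erase i, y j :=
    Finset.sum_congr rfl fun j hj => hne j (Finset.ne_of_mem_erase hj)
  funext j
  by_cases hj : j = i
  · subst hj
    rw [← Finset.add_sum_erase _ _ (Finset.mem_univ j),
      ← Finset.add_sum_erase _ _ (Finset.mem_univ j), hrest] at hsum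
    exact add_right_cancel hsum
  · exact hne j hj

theorem eq_zero_of_add_mem_of_sub_mem_of_mem_extremePoints {E : Type*} [AddCommGroup E]
    [Module ℝ E] {A : Set E} {x v : E} (hx : x ∈ A.extremePoints ℝ) (hadd : x + v ∈ A)
    (hsub : x - v ∈ A) : v = 0 :=
  add_eq_left.1 ((mem_extremePoints.1 hx).2 _ hadd _ hsub (mem_openSegment_add_sub x v)).1

section IntervalSimplex

variable {ι : Type*} [Fintype ι]

def intervalSimplex (l u : ι → ℝ) : Set (ι → ℝ) :=
  {x | ∑ i, x i = 1 ∧ ∀ i, x i ∈ Icc (l i) (u i)}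

variable {l u x : ι → ℝ}

theorem add_single_sub_single_mem_intervalSimplex [DecidableEq ι] (hx : x ∈ intervalSimplex l u)
    {i j : ι} (hij : i ≠ j) {t : ℝ} (hi : x i + t ∈ Icc (l i) (u i))
    (hj : x j - t ∈ Icc (l j) (u j)) :
    x + (Pi.single i t - Pi.single j t) ∈ intervalSimplex l u := by
  refine ⟨?_, fun k => ?_⟩
  · simpa [Finset.sum_add_distrib, Finset.sum_sub_distrib] using hx.1
  rcases eq_or_ne k i with rfl | hki
  · simpa [hij] using hi
  rcases eq_or_ne k j with rfl | hkj
  · convert hj using 1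
    simp [hij.symm, sub_eq_add_neg]
  simpa [hki, hkj] using hx.2 k

theorem eq_of_mem_Ioo_of_mem_Ioo_of_mem_extremePoints
    (hx : x ∈ (intervalSimplex l u).extremePoints ℝ) {i j : ι} (hi : x i ∈ Ioo (l i) (u i))
    (hj : x j ∈ Ioo (l j) (u j)) : i = j := by
  classical
  by_contra hij
  set ε := min (min (x i - l i) (u i - x i)) (min (x j - l j) (u j - x j))
  have hε : 0 < ε := by
    simp only [ε, lt_min_iff, sub_pos]
    exact ⟨hi, hj⟩
  have hεi : ε ≤ x i - l i ∧ ε ≤ u i - x i := ⟨by simp [ε], by simp [ε]⟩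
  have hεj : ε ≤ x j - l j ∧ ε ≤ u j - x j := ⟨by simp [ε], by simp [ε]⟩
  have hxQ := extremePoints_subset hx
  have hadd := add_single_sub_single_mem_intervalSimplex hxQ hij (t := ε)
    ⟨by linarith, by linarith⟩ ⟨by linarith, by linarith⟩
  have hsub := add_single_sub_single_mem_intervalSimplex hxQ hij (t := -ε)
    ⟨by linarith, by linarith⟩ ⟨by linarith, by linarith⟩
  rw [Pi.single_neg, Pi.single_neg, neg_sub_neg, ← neg_sub, ← sub_eq_add_neg] at hsub
  have := congrFun (eq_zero_of_add_mem_of_sub_mem_of_mem_extremePoints hx hadd hsub) i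
  simp [hij] at this
  exact hε.ne' this

theorem exists_forall_ne_eq_or_eq_of_mem_extremePoints
    (hx : x ∈ (intervalSimplex l u).extremePoints ℝ) :
    ∃ i, ∀ j ≠ i, x j = l j ∨ x j = u j := by
  obtain ⟨hsum, hbox⟩ := extremePoints_subset hx
  have : Nonempty ι := by
    by_contra h
    rw [not_nonempty_iff] at h
    simp at hsum
  obtain ⟨i, hi⟩ : ∃ i, ∀ j, x j ∈ Ioo (l j) (u j) → j = i := by
    by_cases h : ∃ i, x i ∈ Ioo (l i) (u i)
    · obtain ⟨i, hi⟩ := h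
      exact ⟨i, fun j hj => eq_of_mem_Ioo_of_mem_Ioo_of_mem_extremePoints hx hj hi⟩
    · push Not at h
      exact ⟨Classical.arbitrary ι, fun j hj => absurd hj (h j)⟩
  refine ⟨i, fun j hji => ?_⟩
  have hj : x j ∈ Icc (l j) (u j) \ Ioo (l j) (u j) := ⟨hbox j, fun h => hji (hi j h)⟩
  rwa [Icc_sdiff_Ioo_same ((hbox j).1.trans (hbox j).2), mem_insert_iff, mem_singleton_iff] at hj

theorem eq_of_forall_ne_eq_upper_iff {y : ι → ℝ} {i : ι} (hx : x ∈ intervalSimplex l u)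
    (hy : y ∈ intervalSimplex l u) (hxi : ∀ j ≠ i, x j = l j ∨ x j = u j)
    (hyi : ∀ j ≠ i, y j = l j ∨ y j = u j) (hxy : ∀ j ≠ i, x j = u j ↔ y j = u j) : x = y := by
  refine eq_of_sum_eq_of_forall_ne i (hx.1.trans hy.1.symm) fun j hj => ?_
  have := hxy j hj
  rcases hxi j hj with h | h <;> rcases hyi j hj with h' | h' <;> simp_all

theorem extremePoints_intervalSimplex_finite_and_ncard_le :
    ((intervalSimplex l u).extremePoints ℝ).Finite ∧
      ((intervalSimplex l u).extremePoints ℝ).ncard ≤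
        Fintype.card ι * 2 ^ (Fintype.card ι - 1) := by
  classical
  choose i hi using fun x : (intervalSimplex l u).extremePoints ℝ =>
    exists_forall_ne_eq_or_eq_of_mem_extremePoints x.2
  let code (x : (intervalSimplex l u).extremePoints ℝ) : Σ i : ι, ({j // j ≠ i} → Bool) :=
    ⟨i x, fun j => decide (x.1 j = u j)⟩
  have hcode : Injective code := by
    intro x y hxy
    have hij : i x = i y := congrArg Sigma.fst hxy
    refine Subtype.ext (eq_of_forall_ne_eq_upper_iff (extremePoints_subset x.2)
      (extremePoints_subset y.2) (hi x) (hij ▸ hi y) fun j hj => ?_)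
    have := congrArg (fun p : Σ i : ι, ({j // j ≠ i} → Bool) =>
      if h : j = p.1 then false else p.2 ⟨j, h⟩) hxy
    simpa [code, hj, ← hij] using this
  refine ⟨finite_coe_iff.1 (Finite.of_injective code hcode), ?_⟩
  rw [← Nat.card_coe_set_eq]
  refine (Nat.card_le_card_of_injective code hcode).trans_eq ?_
  simp

end IntervalSimplex

theorem stmt17_general (f : ℕ) (l u : Fin f → ℝ) :
    (Set.extremePoints ℝ {x : Fin f → ℝ | (∀ i, 0 ≤ x i) ∧ (∑ i, x i) = 1 ∧
        ∀ i, x i ∈ Set.Icc (l i) (u i)}).Finite ∧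
    (Set.extremePoints ℝ {x : Fin f → ℝ | (∀ i, 0 ≤ x i) ∧ (∑ i, x i) = 1 ∧
        ∀ i, x i ∈ Set.Icc (l i) (u i)}).ncard ≤ f * 2 ^ (f - 1) := by
  have hQ : {x : Fin f → ℝ | (∀ i, 0 ≤ x i) ∧ (∑ i, x i) = 1 ∧ ∀ i, x i ∈ Set.Icc (l i) (u i)} =
      intervalSimplex (fun i => max (l i) 0) u := by
    ext x
    simp only [intervalSimplex, mem_ofPred_eq, mem_Icc, max_le_iff, forall_and]
    tauto
  rw [hQ]
  simpa using
    extremePoints_intervalSimplex_finite_and_ncard_le (l := fun i => max (l i) 0) (u := u)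

theorem stmt17 (f : ℕ) (hf : 1 ≤ f) (l u : Fin f → ℝ)
    (hl : ∀ i, 0 ≤ l i) (hlu : ∀ i, l i ≤ u i) (hu : ∀ i, u i ≤ 1) :
    (Set.extremePoints ℝ {x : Fin f → ℝ | (∀ i, 0 ≤ x i) ∧ (∑ i, x i) = 1 ∧
        ∀ i, x i ∈ Set.Icc (l i) (u i)}).Finite ∧
    (Set.extremePoints ℝ {x : Fin f → ℝ | (∀ i, 0 ≤ x i) ∧ (∑ i, x i) = 1 ∧
        ∀ i, x i ∈ Set.Icc (l i) (u i)}).ncard ≤ f * 2 ^ (f - 1) :=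
  stmt17_general f l u
end
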